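/- Let f, g be nonnegative in L²(Ω, ν) with ν a probability measure, ‖f‖_{L²}, ‖g‖_{L²} ≤ R, and suppose μ_f = μ_g. Then (1/(4R² + c₂))·‖f − g‖²_{L²(ν)} ≤ |1 − cSSIM(f,g)|; combined with the upper bound, 1 − cSSIM is equivalent to the squared L² distance in this case. -/

import Mathlib

/-!
Equal means make the luminance factor `Mlum` equal to `1`, so `1 - cSSIM = 1 - Sstr`, which is
`(Var f + Var g - 2 cov(f, g)) / (Var f + Var g + c₂)`. With equal means the numerator is the
variance of `f - g`, i.e. `‖f - g‖²`, and each variance is at most the second moment, hence at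
most `R²`, so the denominator is at most `2R² + c₂ ≤ 4R² + c₂`.
-/

open MeasureTheory

noncomputable def mu {α : Type*} [MeasurableSpace α] (ν : Measure α) (f : α → ℝ) : ℝ :=
  ∫ x, f x ∂ν

noncomputable def cov {α : Type*} [MeasurableSpace α] (ν : Measure α) (f g : α → ℝ) : ℝ :=
  ∫ x, (f x - mu ν f) * (g x - mu ν g) ∂ν

noncomputable def Mlum {α : Type*} [MeasurableSpace α] (ν : Measure α) (f g : α → ℝ)
    (c1 : ℝ) : ℝ :=
  (2 * mu ν f * mu ν g + c1) / ((mu ν f) ^ 2 + (mu ν g) ^ 2 + c1)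

noncomputable def Sstr {α : Type*} [MeasurableSpace α] (ν : Measure α) (f g : α → ℝ)
    (c2 : ℝ) : ℝ :=
  (2 * cov ν f g + c2) / (cov ν f f + cov ν g g + c2)

noncomputable def cSSIM {α : Type*} [MeasurableSpace α] (ν : Measure α) (f g : α → ℝ)
    (c1 c2 : ℝ) : ℝ :=
  Mlum ν f g c1 * Sstr ν f g c2

open ProbabilityTheory

section SSIM

variable {α : Type*} [MeasurableSpace α] {ν : Measure α} {f g : α → ℝ}

theorem cov_eq_covariance : cov ν f g = covariance f g ν := rfl

theorem Mlum_eq_one_of_mu_eq {c1 : ℝ} (hmean : mu ν f = mu ν g) (hc1 : 0 < c1) :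
    Mlum ν f g c1 = 1 := by
  rw [Mlum, hmean, div_eq_one_iff_eq (by positivity)]
  ring

theorem one_sub_Sstr {c2 : ℝ} (h : cov ν f f + cov ν g g + c2 ≠ 0) :
    1 - Sstr ν f g c2 =
      (cov ν f f + cov ν g g - 2 * cov ν f g) / (cov ν f f + cov ν g g + c2) := by
  rw [Sstr, eq_div_iff h, sub_mul, div_mul_cancel₀ _ h]
  ring

theorem integral_sub_sq_eq_of_integral_eq [IsFiniteMeasure ν] (hf : MemLp f 2 ν)
    (hg : MemLp g 2 ν) (hmean : ∫ x, f x ∂ν = ∫ x, g x ∂ν) :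
    ∫ x, (f x - g x) ^ 2 ∂ν = Var[f; ν] - 2 * cov[f, g; ν] + Var[g; ν] := by
  have hmean_sub : ∫ x, (f x - g x) ∂ν = 0 := by
    rw [integral_sub (hf.integrable one_le_two) (hg.integrable one_le_two), hmean, sub_self]
  rw [← variance_of_integral_eq_zero (X := fun x => f x - g x)
    (hf.aemeasurable.sub hg.aemeasurable) hmean_sub, variance_fun_sub hf hg]

theorem variance_le_sq_of_sqrt_integral_sq_le [IsProbabilityMeasure ν] {R : ℝ}
    (hf : AEStronglyMeasurable f ν) (hfR : Real.sqrt (∫ x, f x ^ 2 ∂ν) ≤ R) :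
    Var[f; ν] ≤ R ^ 2 :=
  (variance_le_expectation_sq hf).trans (Real.sqrt_le_iff.mp hfR).2

theorem one_sub_cSSIM_of_mu_eq [IsFiniteMeasure ν] {c1 c2 : ℝ} (hf : MemLp f 2 ν)
    (hg : MemLp g 2 ν) (hc1 : 0 < c1) (hc2 : 0 < c2) (hmean : mu ν f = mu ν g) :
    1 - cSSIM ν f g c1 c2 = (∫ x, (f x - g x) ^ 2 ∂ν) / (Var[f; ν] + Var[g; ν] + c2) := by
  have hVar_f : cov ν f f = Var[f; ν] := covariance_self hf.aemeasurable
  have hVar_g : cov ν g g = Var[g; ν] := covariance_self hg.aemeasurable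
  have hden : cov ν f f + cov ν g g + c2 ≠ 0 := by
    rw [hVar_f, hVar_g]
    have := variance_nonneg f ν
    have := variance_nonneg g ν
    positivity
  rw [cSSIM, Mlum_eq_one_of_mu_eq hmean hc1, one_mul, one_sub_Sstr hden, hVar_f, hVar_g,
    integral_sub_sq_eq_of_integral_eq hf hg hmean, cov_eq_covariance]
  ring

end SSIM

theorem stmt_11_general {α : Type*} [MeasurableSpace α] (ν : Measure α) [IsProbabilityMeasure ν]
    (f g : α → ℝ) (hf : MemLp f 2 ν) (hg : MemLp g 2 ν)
    (c1 c2 R : ℝ)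
    (hc1 : 0 < c1) (hc2 : 0 < c2)
    (hfR : Real.sqrt (∫ x, (f x) ^ 2 ∂ν) ≤ R)
    (hgR : Real.sqrt (∫ x, (g x) ^ 2 ∂ν) ≤ R)
    (hmean : mu ν f = mu ν g) :
    (1 / (4 * R ^ 2 + c2)) * (∫ x, (f x - g x) ^ 2 ∂ν) ≤ |1 - cSSIM ν f g c1 c2| := by
  have hVar_f := variance_le_sq_of_sqrt_integral_sq_le hf.aestronglyMeasurable hfR
  have hVar_g := variance_le_sq_of_sqrt_integral_sq_le hg.aestronglyMeasurable hgR
  have hden_pos : 0 < Var[f; ν] + Var[g; ν] + c2 := by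
    have := variance_nonneg f ν
    have := variance_nonneg g ν
    positivity
  have hdist_nonneg : 0 ≤ ∫ x, (f x - g x) ^ 2 ∂ν := integral_nonneg fun x => sq_nonneg _
  rw [one_sub_cSSIM_of_mu_eq hf hg hc1 hc2 hmean, abs_of_nonneg (by positivity), one_div_mul_eq_div]
  exact div_le_div_of_nonneg_left hdist_nonneg hden_pos (by nlinarith [sq_nonneg R])

theorem stmt_11 {α : Type*} [MeasurableSpace α] (ν : Measure α) [IsProbabilityMeasure ν]
    (f g : α → ℝ) (hf : MemLp f 2 ν) (hg : MemLp g 2 ν)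
    (hf0 : 0 ≤ᵐ[ν] f) (hg0 : 0 ≤ᵐ[ν] g) (c1 c2 R : ℝ)
    (hc1 : 0 < c1) (hc2 : 0 < c2) (hR : 0 < R)
    (hfR : Real.sqrt (∫ x, (f x) ^ 2 ∂ν) ≤ R)
    (hgR : Real.sqrt (∫ x, (g x) ^ 2 ∂ν) ≤ R)
    (hmean : mu ν f = mu ν g) :
    (1 / (4 * R ^ 2 + c2)) * (∫ x, (f x - g x) ^ 2 ∂ν) ≤ |1 - cSSIM ν f g c1 c2| :=
  stmt_11_general ν f g hf hg c1 c2 R hc1 hc2 hfR hgR hmean
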